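/- Let k ≥ 2, let α_0, …, α_k ∈ ℝ with α_0 ≠ 0, suppose every complex root of ϱ(z) = ∑_{j=0}^k α_j z^{k−j} has modulus at most 1, that 1 is a root of ϱ, and that ξ₂ is a root with |ξ₂| = 1, ξ₂ ≠ 1. For n ≥ 1 define w ∈ ℝⁿ by w_m = m·Re(ξ₂^m), let L be the n×n all-ones lower triangular matrix (L = (I − H_n)^{−1}), set u = L·w ∈ ℝⁿ, and let (M_n u)_m = ∑_{j=0}^{min(k,m−1)} α_j u_{m−j}. Then M_n u = α_0 ∏_{i=2}^k (I − ξ_i H_n) w, where ξ_1 = 1, ξ_2, …, ξ_k are the roots of ϱ (with multiplicity), and max_{1≤l≤n} |∑_{i=1}^l (M_n u)_i| ≤ |α_0|·2^{k−2}·max_{1≤l≤n} |∑_{m=1}^l ((I − ξ₂H_n)(I − ξ̄₂H_n)w)_m| (with the single factor (I + H_n) and bound 2^{k−1}‖(I+H_n)w‖_$ in case ξ₂ = −1). -/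

import Mathlib

/-- The Spijker seminorm (without the factor `h`) of the vector `(u 1, …, u n)`:
`max_{1 ≤ l ≤ n} |∑_{i=1}^{l} u i|`. -/
noncomputable def spijkerSeminorm (n : ℕ) (u : ℕ → ℂ) : ℝ :=
  (((Finset.Icc 1 n).sup fun l => ‖∑ i ∈ Finset.Icc 1 l, u i‖₊ : NNReal) : ℝ)

/-- The action of the lower shift `H_n` on vectors indexed by `1,…,n`:
`(H u)_1 = 0` and `(H u)_m = u_{m-1}` for `m ≥ 2`. -/
noncomputable def shiftOp (u : ℕ → ℂ) : ℕ → ℂ :=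
  fun m => if 2 ≤ m then u (m - 1) else 0

/-- The operator `I - ξ·H_n` acting on vectors indexed by `1,…,n`. -/
noncomputable def opFactor (ξ : ℂ) (u : ℕ → ℂ) : ℕ → ℂ :=
  fun m => u m - ξ * shiftOp u m

namespace WSR
open Polynomial Finset

/-- convolution action of a polynomial in the shift -/
noncomputable def T (p : Polynomial ℂ) (v : ℕ → ℂ) : ℕ → ℂ :=
  fun m => ∑ j ∈ Finset.range m, p.coeff j * v (m - j)

/-- the reversed linear factor -/
noncomputable def gfac (ζ : ℂ) : Polynomial ℂ := 1 - Polynomial.C ζ * Polynomial.X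

lemma T_zero_apply (p : Polynomial ℂ) (v : ℕ → ℂ) : T p v 0 = 0 := by simp [T]

lemma T_one {v : ℕ → ℂ} (hv : v 0 = 0) : T 1 v = v := by
  funext m
  cases m with
  | zero => simpa [T] using hv.symm
  | succ m =>
    rw [T, Finset.sum_eq_single 0]
    · simp
    · intro b _ hb
      simp [Polynomial.coeff_one, hb]
    · intro h
      exact absurd (Finset.mem_range.mpr (Nat.succ_pos m)) h

lemma T_C_mul (c : ℂ) (p : Polynomial ℂ) (v : ℕ → ℂ) (m : ℕ) :
    T (Polynomial.C c * p) v m = c * T p v m := by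
  simp [T, Polynomial.coeff_C_mul, Finset.mul_sum, mul_assoc]

lemma T_step (ξ : ℂ) (p : Polynomial ℂ) (v : ℕ → ℂ) :
    T (gfac ξ * p) v = opFactor ξ (T p v) := by
  funext m
  have hco : ∀ j, ((1 - Polynomial.C ξ * Polynomial.X) * p).coeff j
      = p.coeff j - ξ * (Polynomial.X * p).coeff j := by
    intro j
    rw [sub_mul, one_mul, Polynomial.coeff_sub, mul_assoc, Polynomial.coeff_C_mul]
  have hshift : ∑ j ∈ Finset.range m, (Polynomial.X * p).coeff j * v (m - j)
      = shiftOp (T p v) m := by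
    cases m with
    | zero => simp [shiftOp]
    | succ t =>
      rw [Finset.sum_range_succ']
      simp only [Polynomial.coeff_X_mul]
      have h0 : (Polynomial.X * p).coeff 0 = 0 := by
        simp [Polynomial.mul_coeff_zero]
      rw [h0, zero_mul, add_zero]
      have : ∀ i, t + 1 - (i + 1) = t - i := fun i => by omega
      cases t with
      | zero => simp [shiftOp, T]
      | succ s =>
        rw [shiftOp]
        rw [if_pos (by omega)]
        simp only [T, Nat.add_sub_cancel]
        refine Finset.sum_congr rfl fun i _ => by rw [this i]
  have hmain : T (gfac ξ * p) v m
      = ∑ j ∈ Finset.range m, (p.coeff j - ξ * (Polynomial.X * p).coeff j) * v (m - j) :=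
    Finset.sum_congr rfl fun j _ => by rw [gfac, hco]
  rw [hmain]
  simp only [sub_mul, Finset.sum_sub_distrib, mul_assoc, ← Finset.mul_sum]
  rw [hshift]
  rfl

noncomputable def foldOp (l : List ℂ) : (ℕ → ℂ) → (ℕ → ℂ) :=
  (l.map opFactor).foldr (· ∘ ·) id

lemma foldOp_nil : foldOp [] = id := rfl

lemma foldOp_cons (a : ℂ) (l : List ℂ) : foldOp (a :: l) = opFactor a ∘ foldOp l := rfl

lemma foldOp_append (A B : List ℂ) : foldOp (A ++ B) = foldOp A ∘ foldOp B := by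
  induction A with
  | nil => rfl
  | cons a A ih =>
    show foldOp (a :: (A ++ B)) = _
    rw [foldOp_cons, ih, foldOp_cons, Function.comp_assoc]

lemma foldOp_eq_T (l : List ℂ) (v : ℕ → ℂ) (hv : v 0 = 0) :
    foldOp l v = T (l.map gfac).prod v := by
  induction l with
  | nil =>
    rw [foldOp_nil, List.map_nil, List.prod_nil, T_one hv]
    rfl
  | cons a l ih =>
    rw [List.map_cons, List.prod_cons, T_step, foldOp_cons, Function.comp_apply, ih]

-- spijker lemmas
lemma spijker_nonneg (n : ℕ) (u : ℕ → ℂ) : 0 ≤ spijkerSeminorm n u :=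
  NNReal.coe_nonneg _

lemma spijker_le {n : ℕ} {u : ℕ → ℂ} {C : ℝ} (hC : 0 ≤ C)
    (h : ∀ l ∈ Finset.Icc 1 n, ‖∑ i ∈ Finset.Icc 1 l, u i‖ ≤ C) :
    spijkerSeminorm n u ≤ C := by
  have : ((Finset.Icc 1 n).sup fun l => ‖∑ i ∈ Finset.Icc 1 l, u i‖₊) ≤ C.toNNReal :=
    Finset.sup_le fun l hl => by
      rw [← NNReal.coe_le_coe, coe_nnnorm, Real.coe_toNNReal _ hC]
      exact h l hl
  calc spijkerSeminorm n u ≤ (C.toNNReal : ℝ) := NNReal.coe_le_coe.mpr this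
    _ = C := Real.coe_toNNReal _ hC

lemma le_spijker {n : ℕ} (u : ℕ → ℂ) {l : ℕ} (hl : l ∈ Finset.Icc 1 n) :
    ‖∑ i ∈ Finset.Icc 1 l, u i‖ ≤ spijkerSeminorm n u := by
  rw [← coe_nnnorm]
  exact NNReal.coe_le_coe.mpr
    (Finset.le_sup (f := fun l => ‖∑ i ∈ Finset.Icc 1 l, u i‖₊) hl)

lemma sum_shiftOp (v : ℕ → ℂ) (l : ℕ) :
    ∑ i ∈ Finset.Icc 1 l, shiftOp v i = ∑ i ∈ Finset.Icc 1 (l - 1), v i := by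
  rw [← Finset.sum_subset (Finset.Icc_subset_Icc (by omega : 1 ≤ 2) le_rfl)
    (fun x hx hx2 => by
      simp only [Finset.mem_Icc] at hx hx2
      simp [shiftOp, show ¬ 2 ≤ x by omega])]
  refine Finset.sum_nbij' (fun i => i - 1) (fun j => j + 1) ?_ ?_ ?_ ?_ ?_ <;>
    simp only [Finset.mem_Icc]
  · intro a ha; omega
  · intro a ha; omega
  · intro a ha; omega
  · intro a ha; omega
  · intro a ha
    simp [shiftOp, show 2 ≤ a by omega]

lemma sum_opFactor (ξ : ℂ) (v : ℕ → ℂ) (l : ℕ) :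
    ∑ i ∈ Finset.Icc 1 l, opFactor ξ v i
      = ∑ i ∈ Finset.Icc 1 l, v i - ξ * ∑ i ∈ Finset.Icc 1 (l - 1), v i := by
  simp only [opFactor, Finset.sum_sub_distrib, ← Finset.mul_sum, sum_shiftOp]

lemma spijker_opFactor_le {ξ : ℂ} (hξ : ‖ξ‖ ≤ 1) (n : ℕ) (v : ℕ → ℂ) :
    spijkerSeminorm n (opFactor ξ v) ≤ 2 * spijkerSeminorm n v := by
  apply spijker_le (by have := spijker_nonneg n v; linarith)
  intro l hl
  rw [sum_opFactor]
  have h1 : ‖∑ i ∈ Finset.Icc 1 l, v i‖ ≤ spijkerSeminorm n v := le_spijker v hl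
  have h2 : ‖∑ i ∈ Finset.Icc 1 (l - 1), v i‖ ≤ spijkerSeminorm n v := by
    simp only [Finset.mem_Icc] at hl
    rcases Nat.eq_or_lt_of_le hl.1 with h | h
    · simp only [← h]
      simpa using spijker_nonneg n v
    · exact le_spijker v (Finset.mem_Icc.mpr ⟨by omega, by omega⟩)
  calc ‖∑ i ∈ Finset.Icc 1 l, v i - ξ * ∑ i ∈ Finset.Icc 1 (l - 1), v i‖
      ≤ ‖∑ i ∈ Finset.Icc 1 l, v i‖ + ‖ξ * ∑ i ∈ Finset.Icc 1 (l - 1), v i‖ :=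
        norm_sub_le _ _
    _ ≤ spijkerSeminorm n v + 1 * spijkerSeminorm n v := by
        rw [norm_mul]
        refine add_le_add h1 (mul_le_mul ?_ h2 (norm_nonneg _) zero_le_one)
        exact hξ
    _ = 2 * spijkerSeminorm n v := by ring

lemma spijker_foldOp_le (n : ℕ) (l : List ℂ) (h : ∀ ζ ∈ l, ‖ζ‖ ≤ 1) (v : ℕ → ℂ) :
    spijkerSeminorm n (foldOp l v) ≤ 2 ^ l.length * spijkerSeminorm n v := by
  induction l with
  | nil => simp [foldOp]
  | cons a l ih =>
    rw [foldOp_cons]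
    calc spijkerSeminorm n (opFactor a (foldOp l v))
        ≤ 2 * spijkerSeminorm n (foldOp l v) :=
          spijker_opFactor_le (h a List.mem_cons_self) n _
      _ ≤ 2 * (2 ^ l.length * spijkerSeminorm n v) := by
          have := ih (fun ζ hζ => h ζ (List.mem_cons_of_mem a hζ))
          linarith
      _ = 2 ^ (a :: l).length * spijkerSeminorm n v := by
          rw [List.length_cons, pow_succ]; ring

lemma reverse_C' (a : ℂ) : (Polynomial.C a).reverse = Polynomial.C a := by
  rw [Polynomial.reverse, Polynomial.natDegree_C, Polynomial.reflect_C, pow_zero, mul_one]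

lemma reverse_X_sub_C (ζ : ℂ) :
    (Polynomial.X - Polynomial.C ζ).reverse = gfac ζ := by
  rw [gfac]
  ext n
  rw [Polynomial.coeff_reverse, Polynomial.natDegree_X_sub_C]
  match n with
  | 0 => simp [Polynomial.revAt_le, Polynomial.coeff_one]
  | 1 => simp [Polynomial.revAt_le, Polynomial.coeff_one]
  | (n+2) =>
    rw [Polynomial.revAt_eq_self_of_lt (by omega)]
    simp [Polynomial.coeff_X, Polynomial.coeff_one]

lemma reverse_prod {ι : Type*} (s : Finset ι) (f : ι → Polynomial ℂ) :
    (∏ i ∈ s, f i).reverse = ∏ i ∈ s, (f i).reverse := by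
  classical
  induction s using Finset.cons_induction with
  | empty => rw [Finset.prod_empty, Finset.prod_empty, ← Polynomial.C_1, reverse_C']
  | cons a s ha ih =>
    rw [Finset.prod_cons, Finset.prod_cons, Polynomial.reverse_mul_of_domain, ih]

lemma list_range_map_prod {M : Type*} [CommMonoid M] (n : ℕ) (f : ℕ → M) :
    ((List.range n).map f).prod = ∏ i ∈ Finset.range n, f i := by
  induction n with
  | zero => simp
  | succ n ih =>
    rw [List.range_succ, List.map_append, List.prod_append, Finset.prod_range_succ, ih]
    simp

lemma toList_map_prod (s : Finset ℕ) (f : ℕ → ℂ) :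
    ((s.toList.map f).map gfac).prod = ∏ i ∈ s, gfac (f i) := by
  rw [List.map_map]
  exact Finset.prod_map_toList s (gfac ∘ f)

lemma opFactor_one_partialSums (w : ℕ → ℂ) (hw : w 0 = 0) :
    opFactor 1 (fun m => ∑ i ∈ Finset.Icc 1 m, w i) = w := by
  funext m
  simp only [opFactor, shiftOp, one_mul]
  match m with
  | 0 => simpa using hw.symm
  | 1 => norm_num
  | (t+2) =>
    rw [if_pos (by omega)]
    have := Finset.sum_Icc_succ_top (by omega : 1 ≤ t + 2) w
    rw [show t + 2 - 1 = t + 1 from rfl]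
    rw [this]
    ring

end WSR

/-- Key reduction in the instability proof for weakly stable methods. Let
`ϱ(z) = ∑_{j=0}^k α_j z^{k-j} = α_0 ∏_{i=1}^k (z - ξ_i)` with real coefficients,
all `|ξ_i| ≤ 1`, `ξ_1 = 1`, `|ξ_2| = 1`, `ξ_2 ≠ 1`. With the witness `w_m = m·Re(ξ₂^m)`
and `u = (I - H_n)⁻¹ w` (partial sums of `w`), the scaled linear part satisfies
`M_n u = α_0 ∏_{i=2}^k (I - ξ_i H_n) w`, and its Spijker seminorm is bounded by
`|α_0|·2^{k-1}·‖(I + H_n)w‖_$` if `ξ₂ = -1`, and by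
`|α_0|·2^{k-2}·‖(I - ξ₂H_n)(I - ξ̄₂H_n)w‖_$` otherwise. -/
theorem weakly_stable_reduction (k : ℕ) (hk : 2 ≤ k)
    (α : ℕ → ℝ) (hα0 : α 0 ≠ 0) (ξ : ℕ → ℂ)
    (hfac : (∑ j ∈ Finset.range (k + 1),
        Polynomial.C ((α j : ℂ)) * Polynomial.X ^ (k - j))
      = Polynomial.C ((α 0 : ℂ)) * ∏ i ∈ Finset.Icc 1 k, (Polynomial.X - Polynomial.C (ξ i)))
    (hmod : ∀ i ∈ Finset.Icc 1 k, ‖ξ i‖ ≤ 1)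
    (hξ1 : ξ 1 = 1) (hξ2 : ‖ξ 2‖ = 1) (hξ2ne : ξ 2 ≠ 1)
    (n : ℕ) (hn : 1 ≤ n) :
    let w : ℕ → ℂ := fun m => (((m : ℝ) * (ξ 2 ^ m).re : ℝ) : ℂ)
    let u : ℕ → ℂ := fun m => ∑ i ∈ Finset.Icc 1 m, w i
    let Mu : ℕ → ℂ := fun m =>
      ∑ j ∈ Finset.range (min k (m - 1) + 1), (α j : ℂ) * u (m - j)
    let P : (ℕ → ℂ) → (ℕ → ℂ) :=
      ((List.range (k - 1)).map fun i => opFactor (ξ (i + 2))).foldr (· ∘ ·) id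
    (∀ m : ℕ, 1 ≤ m → m ≤ n → Mu m = (α 0 : ℂ) * P w m) ∧
    (ξ 2 = -1 →
      spijkerSeminorm n Mu
        ≤ |α 0| * 2 ^ (k - 1) * spijkerSeminorm n (opFactor (-1) w)) ∧
    (ξ 2 ≠ -1 →
      spijkerSeminorm n Mu
        ≤ |α 0| * 2 ^ (k - 2) *
          spijkerSeminorm n (opFactor (ξ 2) (opFactor (starRingEnd ℂ (ξ 2)) w))) := by
  intro w u Mu P
  classical
  have hw0 : w 0 = 0 := by
    show ((((0:ℕ) : ℝ) * (ξ 2 ^ 0).re : ℝ) : ℂ) = 0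
    simp
  have hu0 : u 0 = 0 := by
    show (∑ i ∈ Finset.Icc 1 0, w i) = 0
    simp
  have hα0' : ((α 0 : ℝ) : ℂ) ≠ 0 := Complex.ofReal_ne_zero.mpr hα0
  set ρ : Polynomial ℂ := ∑ j ∈ Finset.range (k + 1),
      Polynomial.C ((α j : ℂ)) * Polynomial.X ^ (k - j) with hρ
  have hQdeg : (∏ i ∈ Finset.Icc 1 k, (Polynomial.X - Polynomial.C (ξ i))).natDegree = k := by
    rw [Polynomial.natDegree_prod _ _ (fun i _ => Polynomial.X_sub_C_ne_zero (ξ i))]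
    simp [Polynomial.natDegree_X_sub_C, Nat.card_Icc]
  have hρdeg : ρ.natDegree = k := by
    rw [hfac, Polynomial.natDegree_C_mul hα0', hQdeg]
  have hrevρ : ρ.reverse = Polynomial.C ((α 0 : ℂ)) * ∏ i ∈ Finset.Icc 1 k, WSR.gfac (ξ i) := by
    rw [hfac, Polynomial.reverse_mul_of_domain, WSR.reverse_C', WSR.reverse_prod]
    exact congrArg _ (Finset.prod_congr rfl fun i _ => WSR.reverse_X_sub_C (ξ i))
  have hcoeff : ∀ j ≤ k, ρ.reverse.coeff j = ((α j : ℝ) : ℂ) := by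
    intro j hj
    rw [Polynomial.coeff_reverse, hρdeg, Polynomial.revAt_le hj, hρ]
    rw [Polynomial.finset_sum_coeff]
    rw [Finset.sum_eq_single j]
    · rw [Polynomial.coeff_C_mul, Polynomial.coeff_X_pow, if_pos rfl, mul_one]
    · intro b hb hbj
      rw [Polynomial.coeff_C_mul, Polynomial.coeff_X_pow, if_neg, mul_zero]
      simp only [Finset.mem_range] at hb
      omega
    · intro hj'
      exact absurd (Finset.mem_range.mpr (by omega)) hj'
  have hrevdeg : ρ.reverse.natDegree ≤ k := hρdeg ▸ Polynomial.reverse_natDegree_le ρ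
  have hcoeff0 : ∀ j, k < j → ρ.reverse.coeff j = 0 := fun j hj =>
    Polynomial.coeff_eq_zero_of_natDegree_lt (lt_of_le_of_lt hrevdeg hj)
  have huz : ∀ m j : ℕ, m ≤ j → u (m - j) = 0 := by
    intro m j hj
    rw [show m - j = 0 by omega, hu0]
  have hMuT : ∀ m, Mu m = WSR.T ρ.reverse u m := by
    intro m
    show (∑ j ∈ Finset.range (min k (m - 1) + 1), ((α j : ℝ) : ℂ) * u (m - j)) = _
    have e1 : ∀ j ∈ Finset.range (min k (m - 1) + 1),
        ((α j : ℝ) : ℂ) * u (m - j) = ρ.reverse.coeff j * u (m - j) := fun j hj => by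
      rw [hcoeff j (by simp only [Finset.mem_range] at hj; omega)]
    have hsub1 : ∑ j ∈ Finset.range (min k (m - 1) + 1), ρ.reverse.coeff j * u (m - j)
        = ∑ j ∈ Finset.range (m + k + 1), ρ.reverse.coeff j * u (m - j) :=
      Finset.sum_subset (Finset.range_subset_range.mpr (by omega)) (fun j hj hj' => by
        simp only [Finset.mem_range] at hj hj'
        by_cases hjk : k < j
        · rw [hcoeff0 j hjk, zero_mul]
        · rw [huz m j (by omega), mul_zero])
    have hsub2 : ∑ j ∈ Finset.range m, ρ.reverse.coeff j * u (m - j)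
        = ∑ j ∈ Finset.range (m + k + 1), ρ.reverse.coeff j * u (m - j) :=
      Finset.sum_subset (Finset.range_subset_range.mpr (by omega)) (fun j hj hj' => by
        simp only [Finset.mem_range] at hj hj'
        rw [huz m j (by omega), mul_zero])
    rw [Finset.sum_congr rfl e1, hsub1, WSR.T, ← hsub2]
  set l2 : List ℂ := (List.range (k - 1)).map (fun i => ξ (i + 2)) with hl2
  have hPfold : P = WSR.foldOp l2 := by
    show ((List.range (k - 1)).map fun i => opFactor (ξ (i + 2))).foldr (· ∘ ·) id = _
    rw [WSR.foldOp, hl2, List.map_map]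
    rfl
  have hl2prod : (l2.map WSR.gfac).prod = ∏ i ∈ Finset.Icc 2 k, WSR.gfac (ξ i) := by
    rw [hl2, List.map_map, WSR.list_range_map_prod]
    refine Finset.prod_nbij' (fun i => i + 2) (fun i => i - 2) ?_ ?_ ?_ ?_ ?_ <;>
      simp only [Finset.mem_range, Finset.mem_Icc]
    · intro a ha; omega
    · intro a ha; omega
    · intro a ha; omega
    · intro a ha; omega
    · intro a ha; rfl
  have h2mem : 2 ∈ Finset.Icc 2 k := Finset.mem_Icc.mpr ⟨le_rfl, hk⟩
  have hIccsplit : ∏ i ∈ Finset.Icc 1 k, WSR.gfac (ξ i)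
      = WSR.gfac (ξ 1) * ∏ i ∈ Finset.Icc 2 k, WSR.gfac (ξ i) := by
    rw [← Finset.mul_prod_erase (Finset.Icc 1 k) (fun i => WSR.gfac (ξ i))
      (Finset.mem_Icc.mpr ⟨le_rfl, by omega⟩)]
    congr 1
    congr 1
    ext x
    simp only [Finset.mem_erase, Finset.mem_Icc]
    omega
  have hkey : ∀ m : ℕ, Mu m = ((α 0 : ℝ) : ℂ) * WSR.foldOp l2 w m := by
    intro m
    rw [hMuT m, hrevρ, WSR.T_C_mul]
    congr 1
    have hplist : (∏ i ∈ Finset.Icc 1 k, WSR.gfac (ξ i)) = ((l2 ++ [ξ 1]).map WSR.gfac).prod := by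
      rw [List.map_append, List.prod_append, hl2prod, hIccsplit]
      simp [mul_comm]
    rw [hplist, ← WSR.foldOp_eq_T _ _ hu0, WSR.foldOp_append]
    simp only [Function.comp_apply]
    have hfo : WSR.foldOp [ξ 1] u = w := by
      rw [hξ1]
      show opFactor 1 (WSR.foldOp [] u) = w
      rw [WSR.foldOp_nil]
      exact WSR.opFactor_one_partialSums w hw0
    rw [hfo]
  -- existence of conjugate root index
  have heval : ∀ z : ℂ, Polynomial.eval z ρ
      = ((α 0 : ℝ) : ℂ) * ∏ i ∈ Finset.Icc 1 k, (z - ξ i) := by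
    intro z
    rw [hfac]
    simp [Polynomial.eval_prod]
  have hevalsum : ∀ z : ℂ, Polynomial.eval z ρ
      = ∑ j ∈ Finset.range (k + 1), ((α j : ℝ) : ℂ) * z ^ (k - j) := by
    intro z
    rw [hρ]
    simp [Polynomial.eval_finset_sum]
  have heval2 : Polynomial.eval (ξ 2) ρ = 0 := by
    rw [heval]
    rw [Finset.prod_eq_zero (f := fun i => ξ 2 - ξ i)
      (Finset.mem_Icc.mpr ⟨by omega, hk⟩ : 2 ∈ Finset.Icc 1 k) (sub_self (ξ 2)), mul_zero]
  have hevalconj : Polynomial.eval (starRingEnd ℂ (ξ 2)) ρ = 0 := by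
    rw [hevalsum]
    calc ∑ j ∈ Finset.range (k + 1), ((α j : ℝ) : ℂ) * (starRingEnd ℂ (ξ 2)) ^ (k - j)
        = starRingEnd ℂ (∑ j ∈ Finset.range (k + 1), ((α j : ℝ) : ℂ) * (ξ 2) ^ (k - j)) := by
          rw [map_sum]
          refine Finset.sum_congr rfl fun j _ => ?_
          rw [map_mul, map_pow, Complex.conj_ofReal]
      _ = 0 := by rw [← hevalsum, heval2, map_zero]
  obtain ⟨i0, hi0mem, hi0⟩ : ∃ i ∈ Finset.Icc 1 k, starRingEnd ℂ (ξ 2) - ξ i = 0 := by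
    have h := hevalconj
    rw [heval] at h
    rcases mul_eq_zero.mp h with h' | h'
    · exact absurd h' hα0'
    · exact Finset.prod_eq_zero_iff.mp h'
  have hi0' : ξ i0 = starRingEnd ℂ (ξ 2) := by
    have := sub_eq_zero.mp hi0
    exact this.symm
  -- the general bound machinery
  have hbound : ∀ (lrest : List ℂ) (tgt : ℕ → ℂ),
      (∀ ζ ∈ lrest, ‖ζ‖ ≤ 1) →
      WSR.foldOp l2 w = WSR.foldOp lrest tgt → ∀ e : ℕ, lrest.length ≤ e →
      spijkerSeminorm n Mu ≤ |α 0| * 2 ^ e * spijkerSeminorm n tgt := by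
    intro lrest tgt habs heq e he
    have htgtnn := WSR.spijker_nonneg n tgt
    have htgt : spijkerSeminorm n (WSR.foldOp l2 w) ≤ 2 ^ e * spijkerSeminorm n tgt := by
      rw [heq]
      calc spijkerSeminorm n (WSR.foldOp lrest tgt)
          ≤ 2 ^ lrest.length * spijkerSeminorm n tgt := WSR.spijker_foldOp_le n lrest habs tgt
        _ ≤ 2 ^ e * spijkerSeminorm n tgt := by
            have h2 : (2:ℝ) ^ lrest.length ≤ 2 ^ e := by
              apply pow_le_pow_right₀ (by norm_num) he
            nlinarith
    apply WSR.spijker_le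
      (mul_nonneg (mul_nonneg (abs_nonneg _) (by positivity)) htgtnn)
    intro l hl
    have hsum : ∑ i ∈ Finset.Icc 1 l, Mu i
        = ((α 0 : ℝ) : ℂ) * ∑ i ∈ Finset.Icc 1 l, WSR.foldOp l2 w i := by
      rw [Finset.mul_sum]
      exact Finset.sum_congr rfl fun i _ => hkey i
    rw [hsum, norm_mul]
    have hnα : ‖((α 0 : ℝ) : ℂ)‖ = |α 0| := by
      rw [Complex.norm_real, Real.norm_eq_abs]
    rw [hnα]
    calc |α 0| * ‖∑ i ∈ Finset.Icc 1 l, WSR.foldOp l2 w i‖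
        ≤ |α 0| * spijkerSeminorm n (WSR.foldOp l2 w) :=
          mul_le_mul_of_nonneg_left (WSR.le_spijker _ hl) (abs_nonneg _)
      _ ≤ |α 0| * (2 ^ e * spijkerSeminorm n tgt) :=
          mul_le_mul_of_nonneg_left htgt (abs_nonneg _)
      _ = |α 0| * 2 ^ e * spijkerSeminorm n tgt := by ring
  have hcardIcc : (Finset.Icc 2 k).card = k - 1 := by rw [Nat.card_Icc]; omega
  refine ⟨fun m _ _ => by rw [hkey m, hPfold], ?_, ?_⟩
  · -- case ξ 2 = -1
    intro h2
    set S := (Finset.Icc 2 k).erase 2 with hS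
    have heqfold : WSR.foldOp l2 w = WSR.foldOp (S.toList.map ξ ++ [ξ 2]) w := by
      rw [WSR.foldOp_eq_T _ _ hw0, WSR.foldOp_eq_T _ _ hw0]
      congr 1
      rw [hl2prod, List.map_append, List.prod_append, WSR.toList_map_prod]
      simp only [List.map_cons, List.map_nil, List.prod_cons, List.prod_nil, mul_one]
      rw [← Finset.mul_prod_erase (Finset.Icc 2 k) (fun i => WSR.gfac (ξ i)) h2mem]
      rw [mul_comm]
    have heqfold2 : WSR.foldOp l2 w = WSR.foldOp (S.toList.map ξ) (opFactor (-1) w) := by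
      rw [heqfold, WSR.foldOp_append]
      simp only [Function.comp_apply]
      refine congrArg _ ?_
      show opFactor (ξ 2) (id w) = opFactor (-1) w
      rw [h2]
      rfl
    have habsS : ∀ ζ ∈ S.toList.map ξ, ‖ζ‖ ≤ 1 := by
      intro ζ hζ
      obtain ⟨i, hi, rfl⟩ := List.mem_map.mp hζ
      rw [Finset.mem_toList] at hi
      apply hmod
      simp only [hS, Finset.mem_erase, Finset.mem_Icc] at hi
      exact Finset.mem_Icc.mpr ⟨by omega, hi.2.2⟩
    have hlen : (S.toList.map ξ).length ≤ k - 1 := by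
      have hcS : S.card = k - 2 := by
        rw [hS, Finset.card_erase_of_mem h2mem, hcardIcc]
        omega
      rw [List.length_map, Finset.length_toList, hcS]
      omega
    exact hbound _ _ habsS heqfold2 (k - 1) hlen
  · -- case ξ 2 ≠ -1
    intro h3
    have him : ξ 2 ≠ starRingEnd ℂ (ξ 2) := by
      intro h
      have himz : (ξ 2).im = 0 := Complex.conj_eq_iff_im.mp h.symm
      have hre : ξ 2 = (((ξ 2).re : ℝ) : ℂ) := Complex.ext rfl (by simp [himz])
      rw [hre, Complex.norm_real, Real.norm_eq_abs] at hξ2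
      rcases (abs_eq (by norm_num : (0:ℝ) ≤ 1)).mp hξ2 with h' | h'
      · exact hξ2ne (by rw [hre, h']; norm_num)
      · exact h3 (by rw [hre, h']; norm_num)
    have hi0ne1 : i0 ≠ 1 := by
      intro h
      rw [h, hξ1] at hi0'
      apply hξ2ne
      have := congrArg (starRingEnd ℂ) hi0'.symm
      simpa using this
    have hi0ne2 : i0 ≠ 2 := fun h => him (h ▸ hi0')
    have hi0Icc : i0 ∈ (Finset.Icc 2 k).erase 2 := by
      simp only [Finset.mem_Icc] at hi0mem
      simp only [Finset.mem_erase, Finset.mem_Icc]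
      exact ⟨hi0ne2, by omega, hi0mem.2⟩
    set S := ((Finset.Icc 2 k).erase 2).erase i0 with hS
    have heqfold : WSR.foldOp l2 w = WSR.foldOp (S.toList.map ξ ++ [ξ 2, ξ i0]) w := by
      rw [WSR.foldOp_eq_T _ _ hw0, WSR.foldOp_eq_T _ _ hw0]
      congr 1
      rw [hl2prod, List.map_append, List.prod_append, WSR.toList_map_prod]
      simp only [List.map_cons, List.map_nil, List.prod_cons, List.prod_nil, mul_one]
      rw [← Finset.mul_prod_erase (Finset.Icc 2 k) (fun i => WSR.gfac (ξ i)) h2mem,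
        ← Finset.mul_prod_erase ((Finset.Icc 2 k).erase 2) (fun i => WSR.gfac (ξ i)) hi0Icc]
      ring
    have heqfold2 : WSR.foldOp l2 w
        = WSR.foldOp (S.toList.map ξ) (opFactor (ξ 2) (opFactor (starRingEnd ℂ (ξ 2)) w)) := by
      rw [heqfold, WSR.foldOp_append]
      simp only [Function.comp_apply]
      refine congrArg _ ?_
      show opFactor (ξ 2) (opFactor (ξ i0) (id w)) = _
      rw [hi0']
      rfl
    have habsS : ∀ ζ ∈ S.toList.map ξ, ‖ζ‖ ≤ 1 := by
      intro ζ hζ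
      obtain ⟨i, hi, rfl⟩ := List.mem_map.mp hζ
      rw [Finset.mem_toList] at hi
      apply hmod
      simp only [hS, Finset.mem_erase, Finset.mem_Icc] at hi
      exact Finset.mem_Icc.mpr ⟨by omega, hi.2.2.2⟩
    have hlen : (S.toList.map ξ).length ≤ k - 2 := by
      have hcS : S.card = k - 3 := by
        rw [hS, Finset.card_erase_of_mem hi0Icc, Finset.card_erase_of_mem h2mem, hcardIcc]
        omega
      rw [List.length_map, Finset.length_toList, hcS]
      omega
    exact hbound _ _ habsS heqfold2 (k - 2) hlen
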